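/- Let M be a pointed metric space, let Y be a real Banach space, and let Y₁ be an absolute summand of Y. If SA(M, Y) is dense in Lip₀(M, Y), then SA(M, Y₁) is dense in Lip₀(M, Y₁), where Y₁ is regarded as a Banach space with the norm inherited from Y. -/

import Mathlib

open Set Metric NNReal MeasureTheory

/-- A Lipschitz map vanishing at the base point `z`, i.e. an element of `Lip₀(M,Y)`. -/
def IsLip0 {M Y : Type*} [MetricSpace M] [NormedAddCommGroup Y]
    (z : M) (F : M → Y) : Prop :=
  (∃ K : ℝ≥0, LipschitzWith K F) ∧ F z = 0

/-- The Lipschitz norm `‖F‖_L = sup {‖F p - F q‖ / d(p,q) : p ≠ q}`. -/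
noncomputable def lipNorm {M Y : Type*} [MetricSpace M] [NormedAddCommGroup Y]
    (F : M → Y) : ℝ :=
  sSup {r : ℝ | ∃ p q : M, p ≠ q ∧ r = ‖F p - F q‖ / dist p q}

/-- `F` strongly attains its norm. -/
def StronglyAttains {M Y : Type*} [MetricSpace M] [NormedAddCommGroup Y]
    (F : M → Y) : Prop :=
  ∃ p q : M, p ≠ q ∧ ‖F p - F q‖ = lipNorm F * dist p q

/-- `F` is Lipschitz compact: its Lipschitz image is relatively compact. -/
def IsLipCompact {M Y : Type*} [MetricSpace M] [NormedAddCommGroup Y] [NormedSpace ℝ Y]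
    (F : M → Y) : Prop :=
  IsCompact (closure {y : Y | ∃ p q : M, p ≠ q ∧ y = (dist p q)⁻¹ • (F p - F q)})

/-- The pair `(M,Y)` has the Lip-BPB property witnessed by the function `η`. -/
def LipBPBWith (M : Type*) [MetricSpace M] (z : M)
    (Y : Type*) [NormedAddCommGroup Y] (η : ℝ → ℝ) : Prop :=
  (∀ ε > 0, η ε > 0) ∧
  ∀ ε > 0, ∀ F : M → Y, IsLip0 z F → lipNorm F = 1 →
    ∀ p q : M, p ≠ q → ‖F p - F q‖ > (1 - η ε) * dist p q →
      ∃ G : M → Y, IsLip0 z G ∧ ∃ r s : M, r ≠ s ∧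
        ‖G r - G s‖ = dist r s ∧ lipNorm G = 1 ∧
        lipNorm (fun x => G x - F x) < ε ∧
        (dist p r + dist q s) / dist p q < ε

/-- The pair `(M,Y)` has the Lip-BPB property. -/
def LipBPB (M : Type*) [MetricSpace M] (z : M)
    (Y : Type*) [NormedAddCommGroup Y] : Prop :=
  ∃ η : ℝ → ℝ, LipBPBWith M z Y η

/-- The pair `(M,Y)` has the Lip-BPB property for Lipschitz compact maps
witnessed by the function `η`. -/
def LipBPBCompactWith (M : Type*) [MetricSpace M] (z : M)
    (Y : Type*) [NormedAddCommGroup Y] [NormedSpace ℝ Y] (η : ℝ → ℝ) : Prop :=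
  (∀ ε > 0, η ε > 0) ∧
  ∀ ε > 0, ∀ F : M → Y, IsLip0 z F → IsLipCompact F → lipNorm F = 1 →
    ∀ p q : M, p ≠ q → ‖F p - F q‖ > (1 - η ε) * dist p q →
      ∃ G : M → Y, IsLip0 z G ∧ IsLipCompact G ∧ ∃ r s : M, r ≠ s ∧
        ‖G r - G s‖ = dist r s ∧ lipNorm G = 1 ∧
        lipNorm (fun x => G x - F x) < ε ∧
        (dist p r + dist q s) / dist p q < ε

/-- The pair `(M,Y)` has the Lip-BPB property for Lipschitz compact maps. -/
def LipBPBCompact (M : Type*) [MetricSpace M] (z : M)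
    (Y : Type*) [NormedAddCommGroup Y] [NormedSpace ℝ Y] : Prop :=
  ∃ η : ℝ → ℝ, LipBPBCompactWith M z Y η

/-- `SA(M,Y)` is dense in `Lip₀(M,Y)`. -/
def SADense (M : Type*) [MetricSpace M] (z : M)
    (Y : Type*) [NormedAddCommGroup Y] : Prop :=
  ∀ F : M → Y, IsLip0 z F → ∀ ε > 0,
    ∃ G : M → Y, IsLip0 z G ∧ StronglyAttains G ∧ lipNorm (fun x => G x - F x) < ε

/-- `SA_K(M,Y)` is dense in `Lipc(M,Y)`. -/
def SAKDense (M : Type*) [MetricSpace M] (z : M)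
    (Y : Type*) [NormedAddCommGroup Y] [NormedSpace ℝ Y] : Prop :=
  ∀ F : M → Y, IsLip0 z F → IsLipCompact F → ∀ ε > 0,
    ∃ G : M → Y, IsLip0 z G ∧ IsLipCompact G ∧ StronglyAttains G ∧
      lipNorm (fun x => G x - F x) < ε

/-- `N` is an absolute norm on `ℝ²` (written in curried form). -/
def IsAbsoluteNorm (N : ℝ → ℝ → ℝ) : Prop :=
  (∀ s t : ℝ, N s t = 0 ↔ s = 0 ∧ t = 0) ∧
  (∀ c s t : ℝ, N (c * s) (c * t) = |c| * N s t) ∧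
  (∀ s₁ t₁ s₂ t₂ : ℝ, N (s₁ + s₂) (t₁ + t₂) ≤ N s₁ t₁ + N s₂ t₂) ∧
  N 1 0 = 1 ∧ N 0 1 = 1 ∧ (∀ s t : ℝ, N s t = N |s| |t|)

/-- The closed subspace `Y₁` is an absolute summand of `Y`. -/
def IsAbsoluteSummand {Y : Type*} [NormedAddCommGroup Y] [NormedSpace ℝ Y]
    (Y₁ : Submodule ℝ Y) : Prop :=
  IsClosed (Y₁ : Set Y) ∧
  ∃ Z : Submodule ℝ Y, IsClosed (Z : Set Y) ∧
    ∃ N : ℝ → ℝ → ℝ, IsAbsoluteNorm N ∧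
      (∀ y : Y, ∃! p : Y₁ × Z, y = (p.1 : Y) + (p.2 : Y)) ∧
      (∀ (y₁ : Y₁) (w : Z), ‖(y₁ : Y) + (w : Y)‖ = N ‖(y₁ : Y)‖ ‖(w : Y)‖)


/-!
Split `Y = Y₁ ⊕ Z` by projections `P`, `Q` with `‖v‖ = N ‖P v‖ ‖Q v‖`. Approximate
`F ∈ Lip₀(M, Y₁)` by some `G ∈ SA(M, Y)` attaining its norm at `(p, q)`, and put `v₀ = G p - G q`.
A supporting line `t s + k u ≤ N s u` of `N` at `(‖P v₀‖, ‖Q v₀‖)` with `t, k ≥ 0`, together with a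
norming functional of `Q v₀`, yields a linear contraction `T : Y → Y₁` which is isometric at `v₀`
and equals `t • id` on `Y₁`; hence `T ∘ G` strongly attains its norm at `(p, q)`. As `G` is close
to `F`, `‖Q v₀‖` is small, which forces `t` close to `1` through `(1 - t) ‖P v₀‖ ≤ ‖Q v₀‖`, so
`T ∘ G - F = T ∘ (G - F) + (t - 1) • F` is small too. If `‖F‖_L` is already small, the zero map
does the job.
-/

section LipNorm

variable {M Y : Type*} [MetricSpace M] [NormedAddCommGroup Y]

theorem lipNorm_nonneg (F : M → Y) : 0 ≤ lipNorm F :=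
  Real.sSup_nonneg fun _ ⟨_, _, _, hr⟩ => hr ▸ by positivity

theorem lipNorm_le {F : M → Y} {c : ℝ} (hc : 0 ≤ c)
    (h : ∀ x y, ‖F x - F y‖ ≤ c * dist x y) : lipNorm F ≤ c :=
  Real.sSup_le (fun _ ⟨x, y, hxy, hr⟩ => hr ▸ (div_le_iff₀ (dist_pos.2 hxy)).2 (h x y)) hc

theorem div_le_lipNorm {F : M → Y} {K : ℝ≥0} (hF : LipschitzWith K F) {x y : M} (hxy : x ≠ y) :
    ‖F x - F y‖ / dist x y ≤ lipNorm F := by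
  refine le_csSup ⟨K, ?_⟩ ⟨x, y, hxy, rfl⟩
  rintro _ ⟨p, q, hpq, rfl⟩
  rw [div_le_iff₀ (dist_pos.2 hpq), ← dist_eq_norm]
  exact hF.dist_le_mul p q

theorem norm_sub_le_lipNorm_mul {F : M → Y} {K : ℝ≥0} (hF : LipschitzWith K F) (x y : M) :
    ‖F x - F y‖ ≤ lipNorm F * dist x y := by
  rcases eq_or_ne x y with rfl | hxy
  · simp
  · exact (div_le_iff₀ (dist_pos.2 hxy)).1 (div_le_lipNorm hF hxy)

theorem stronglyAttains_of_norm_sub_le {F : M → Y} {c : ℝ} {p q : M}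
    (h : ∀ x y, ‖F x - F y‖ ≤ c * dist x y) (hpq : p ≠ q) (hc : ‖F p - F q‖ = c * dist p q) :
    StronglyAttains F := by
  have hd : 0 < dist p q := dist_pos.2 hpq
  have hc₀ : 0 ≤ c := nonneg_of_mul_nonneg_left (hc ▸ norm_nonneg _) hd
  have hF : LipschitzWith c.toNNReal F :=
    .of_dist_le' fun x y => by simpa [dist_eq_norm] using h x y
  have hlip : lipNorm F = c := by
    refine le_antisymm (lipNorm_le hc₀ h) ?_
    simpa [hc, hd.ne'] using div_le_lipNorm hF hpq
  exact ⟨p, q, hpq, by rw [hlip, hc]⟩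

theorem IsLip0.coe {Y' : Type*} [NormedAddCommGroup Y'] [NormedSpace ℝ Y'] {Y₁ : Submodule ℝ Y'}
    {z : M} {F : M → Y₁} (hF : IsLip0 z F) : IsLip0 z fun x => (F x : Y') :=
  ⟨⟨_, (LipschitzWith.subtype_val _).comp hF.1.choose_spec⟩, by simp [hF.2]⟩

end LipNorm

namespace IsAbsoluteNorm

variable {N : ℝ → ℝ → ℝ}

theorem apply_mul_mul (hN : IsAbsoluteNorm N) (c s u : ℝ) : N (c * s) (c * u) = |c| * N s u :=
  hN.2.1 c s u

theorem apply_add_add_le (hN : IsAbsoluteNorm N) (s₁ u₁ s₂ u₂ : ℝ) :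
    N (s₁ + s₂) (u₁ + u₂) ≤ N s₁ u₁ + N s₂ u₂ :=
  hN.2.2.1 s₁ u₁ s₂ u₂

theorem apply_zero_right (hN : IsAbsoluteNorm N) (s : ℝ) : N s 0 = |s| := by
  simpa [hN.2.2.2.1] using hN.apply_mul_mul s 1 0

theorem apply_zero_left (hN : IsAbsoluteNorm N) (u : ℝ) : N 0 u = |u| := by
  simpa [hN.2.2.2.2.1] using hN.apply_mul_mul u 0 1

theorem apply_neg_left (hN : IsAbsoluteNorm N) (s u : ℝ) : N (-s) u = N s u := by
  rw [hN.2.2.2.2.2, abs_neg, ← hN.2.2.2.2.2]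

theorem apply_neg_right (hN : IsAbsoluteNorm N) (s u : ℝ) : N s (-u) = N s u := by
  rw [hN.2.2.2.2.2, abs_neg, ← hN.2.2.2.2.2]

theorem abs_left_le (hN : IsAbsoluteNorm N) (s u : ℝ) : |s| ≤ N s u := by
  have h := hN.apply_add_add_le s u s (-u)
  rw [add_neg_cancel, hN.apply_zero_right, hN.apply_neg_right, ← two_mul, abs_mul, abs_two] at h
  linarith

theorem abs_right_le (hN : IsAbsoluteNorm N) (s u : ℝ) : |u| ≤ N s u := by
  have h := hN.apply_add_add_le s u (-s) u
  rw [add_neg_cancel, hN.apply_zero_left, hN.apply_neg_left, ← two_mul, abs_mul, abs_two] at h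
  linarith

theorem le_abs_add_abs (hN : IsAbsoluteNorm N) (s u : ℝ) : N s u ≤ |s| + |u| := by
  simpa [hN.apply_zero_right, hN.apply_zero_left] using hN.apply_add_add_le s 0 0 u

/-- Hahn–Banach in `(ℝ², N)`; since `N` is absolute, the supporting functional at a point of the
positive quadrant can be taken with nonnegative coefficients. -/
theorem exists_support (hN : IsAbsoluteNorm N) {a b : ℝ} (ha : 0 ≤ a) (hb : 0 ≤ b) :
    ∃ t k : ℝ, 0 ≤ t ∧ 0 ≤ k ∧ (∀ s u, t * s + k * u ≤ N s u) ∧ t * a + k * b = N a b := by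
  have hsmul (c : ℝ) : N (c * a) (c * b) = |c| * N a b := hN.apply_mul_mul c a b
  have hNab : 0 ≤ N a b := (abs_nonneg a).trans (hN.abs_left_le a b)
  have hker (c : ℝ) (hc : c • (a, b) = 0) : c • N a b = 0 := by
    have hab : c * a = 0 ∧ c * b = 0 := by simpa using hc
    have h0 : |c| * N a b = 0 := by rw [← hsmul, hab.1, hab.2, hN.apply_zero_right, abs_zero]
    rcases mul_eq_zero.1 h0 with h | h
    · simp [abs_eq_zero.1 h]
    · simp [h]
  obtain ⟨g, hgf, hgN⟩ := exists_extension_of_le_sublinear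
    (LinearPMap.mkSpanSingleton' (a, b) (N a b) hker) (fun x => N x.1 x.2)
    (fun c hc x => by simpa [abs_of_pos hc] using hN.apply_mul_mul c x.1 x.2)
    (fun x y => hN.apply_add_add_le x.1 x.2 y.1 y.2) (by
      rintro ⟨x, hx⟩
      obtain ⟨c, rfl⟩ := Submodule.mem_span_singleton.1 hx
      rw [LinearPMap.mkSpanSingleton'_apply, RingHom.id_apply, smul_eq_mul]
      change c * N a b ≤ N (c * a) (c * b)
      rw [hsmul]
      exact mul_le_mul_of_nonneg_right (le_abs_self c) hNab)
  have hg (s u : ℝ) : g (s, u) = g (1, 0) * s + g (0, 1) * u := by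
    rw [show ((s, u) : ℝ × ℝ) = s • (1, 0) + u • (0, 1) by simp, map_add, map_smul, map_smul,
      smul_eq_mul, smul_eq_mul, mul_comm s, mul_comm u]
  have hgN' (s u : ℝ) : g (1, 0) * s + g (0, 1) * u ≤ N s u := hg s u ▸ hgN (s, u)
  have hsupp (s u : ℝ) : |g (1, 0)| * s + |g (0, 1)| * u ≤ N s u := by
    rcases abs_choice (g (1, 0)) with h₁ | h₁ <;> rcases abs_choice (g (0, 1)) with h₂ | h₂ <;>
      rw [h₁, h₂]
    · exact hgN' s u
    · linarith [hgN' s (-u), hN.apply_neg_right s u]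
    · linarith [hgN' (-s) u, hN.apply_neg_left s u]
    · linarith [hgN' (-s) (-u), hN.apply_neg_left s (-u), hN.apply_neg_right s u]
  have hgab : g (a, b) = N a b :=
    (hgf ⟨(a, b), Submodule.mem_span_singleton_self _⟩).trans
      (LinearPMap.mkSpanSingleton'_apply_self _ _ _ _)
  refine ⟨_, _, abs_nonneg _, abs_nonneg _, hsupp, le_antisymm (hsupp a b) ?_⟩
  rw [← hgab, hg]
  gcongr <;> exact le_abs_self _

end IsAbsoluteNorm

theorem Submodule.isCompl_of_existsUnique_add {R E : Type*} [Ring R] [AddCommGroup E]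
    [Module R E] {p q : Submodule R E} (h : ∀ x : E, ∃! u : p × q, x = u.1 + u.2) :
    IsCompl p q := by
  refine ⟨Submodule.disjoint_def.2 fun x hxp hxq => ?_, codisjoint_iff.2 ?_⟩
  · have h' := (h x).unique (y₁ := (⟨x, hxp⟩, 0)) (y₂ := (0, ⟨x, hxq⟩)) (by simp) (by simp)
    simpa using congrArg (fun u => (u.1 : E)) h'
  · refine Submodule.eq_top_iff'.2 fun x => ?_
    obtain ⟨u, hu, -⟩ := h x
    exact hu ▸ Submodule.add_mem_sup u.1.2 u.2.2

section AbsoluteSummand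

variable {Y : Type*} [NormedAddCommGroup Y] [NormedSpace ℝ Y] {Y₁ : Submodule ℝ Y}

theorem IsAbsoluteSummand.exists_projections (h : IsAbsoluteSummand Y₁) :
    ∃ N, IsAbsoluteNorm N ∧ ∃ (Z : Submodule ℝ Y) (P : Y →ₗ[ℝ] Y₁) (Q : Y →ₗ[ℝ] Z),
      (∀ v, ‖v‖ = N ‖P v‖ ‖Q v‖) ∧ (∀ y : Y₁, P y = y) ∧ ∀ y : Y₁, Q y = 0 := by
  obtain ⟨-, Z, -, N, hN, hdec, hnorm⟩ := h
  have hYZ : IsCompl Y₁ Z := Submodule.isCompl_of_existsUnique_add hdec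
  refine ⟨N, hN, Z, Y₁.projectionOnto Z hYZ, Z.projectionOnto Y₁ hYZ.symm, fun v => ?_,
    Submodule.projectionOnto_apply_left hYZ, Submodule.projectionOnto_apply_right hYZ.symm⟩
  conv_lhs => rw [← Submodule.projection_add_projection_eq_self hYZ v]
  exact hnorm _ _

variable {Z : Type*} [NormedAddCommGroup Z] [NormedSpace ℝ Z] {N : ℝ → ℝ → ℝ}
  {P : Y →ₗ[ℝ] Y₁} {Q : Y →ₗ[ℝ] Z}

/-- With `(t, k)` supporting `N` at `(‖P v₀‖, ‖Q v₀‖)` and `g` norming `Q v₀`, the map is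
`T v = t • P v + (k * g (Q v) / ‖P v₀‖) • P v₀`. -/
theorem exists_contraction_norm_eq (hN : IsAbsoluteNorm N) (hPQ : ∀ v, ‖v‖ = N ‖P v‖ ‖Q v‖)
    (hP : ∀ y : Y₁, P y = y) (hQ : ∀ y : Y₁, Q y = 0) {v₀ : Y} (hv₀ : P v₀ ≠ 0) :
    ∃ (T : Y →ₗ[ℝ] Y₁) (t : ℝ), (∀ v, ‖T v‖ ≤ ‖v‖) ∧ ‖T v₀‖ = ‖v₀‖ ∧
      (∀ y : Y₁, T y = t • y) ∧ t ≤ 1 ∧ (1 - t) * ‖P v₀‖ ≤ ‖Q v₀‖ := by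
  have ha : 0 < ‖P v₀‖ := norm_pos_iff.2 hv₀
  obtain ⟨t, k, ht, hk, hsupp, hsupp₀⟩ := hN.exists_support ha.le (norm_nonneg (Q v₀))
  have ht₁ : t ≤ 1 := by simpa [hN.apply_zero_right] using hsupp 1 0
  have hk₁ : k ≤ 1 := by simpa [hN.apply_zero_left] using hsupp 0 1
  obtain ⟨g, hg, hgv₀⟩ := exists_dual_vector'' ℝ (Q v₀)
  let T : Y →ₗ[ℝ] Y₁ := t • P + ((k / ‖P v₀‖) • ((g : Z →ₗ[ℝ] ℝ) ∘ₗ Q)).smulRight (P v₀)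
  have hT (v : Y) : T v = t • P v + (k / ‖P v₀‖ * g (Q v)) • P v₀ := rfl
  refine ⟨T, t, fun v => ?_, ?_, fun y => by simp [hT, hP, hQ], ht₁, ?_⟩
  · have hgQ : |g (Q v)| ≤ ‖Q v‖ :=
      (g.le_opNorm _).trans (mul_le_of_le_one_left (norm_nonneg _) hg)
    calc ‖T v‖ ≤ t * ‖P v‖ + k * ‖Q v‖ := by
          rw [hT]
          refine (norm_add_le _ _).trans (add_le_add ?_ ?_)
          · rw [norm_smul, Real.norm_eq_abs, abs_of_nonneg ht]
          · rw [norm_smul, Real.norm_eq_abs, abs_mul, abs_div, abs_of_nonneg hk, abs_norm,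
              div_mul_eq_mul_div, div_mul_cancel₀ _ ha.ne']
            exact mul_le_mul_of_nonneg_left hgQ hk
      _ ≤ N ‖P v‖ ‖Q v‖ := hsupp _ _
      _ = ‖v‖ := (hPQ v).symm
  · rw [hT, hgv₀, ← add_smul, norm_smul, Real.norm_eq_abs, abs_of_nonneg (by positivity), hPQ,
      ← hsupp₀]
    field_simp
    rfl
  · have := hN.abs_left_le ‖P v₀‖ ‖Q v₀‖
    rw [abs_norm] at this
    nlinarith [norm_nonneg (Q v₀)]

end AbsoluteSummand

section Approximation

variable {M Y : Type*} [MetricSpace M] [NormedAddCommGroup Y] [NormedSpace ℝ Y]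
  {Y₁ : Submodule ℝ Y} {Z : Type*} [NormedAddCommGroup Z] [NormedSpace ℝ Z]
  {N : ℝ → ℝ → ℝ} {P : Y →ₗ[ℝ] Y₁} {Q : Y →ₗ[ℝ] Z} {z : M}

theorem stronglyAttains_comp_of_norm_map_eq {Y' : Type*} [NormedAddCommGroup Y'] [NormedSpace ℝ Y']
    {T : Y →ₗ[ℝ] Y'} (hT : ∀ v, ‖T v‖ ≤ ‖v‖) {G : M → Y} {K : ℝ≥0} (hG : LipschitzWith K G)
    {p q : M} (hpq : p ≠ q) (hGpq : ‖G p - G q‖ = lipNorm G * dist p q)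
    (hTpq : ‖T (G p - G q)‖ = ‖G p - G q‖) :
    StronglyAttains fun x => T (G x) := by
  refine stronglyAttains_of_norm_sub_le (c := lipNorm G) (fun x y => ?_) hpq ?_
  · rw [← map_sub]
    exact (hT _).trans (norm_sub_le_lipNorm_mul hG x y)
  · rw [← map_sub, hTpq, hGpq]

theorem lipNorm_comp_sub_le {T : Y →ₗ[ℝ] Y₁} (hT : ∀ v, ‖T v‖ ≤ ‖v‖) {t : ℝ}
    (hTY₁ : ∀ y : Y₁, T y = t • y) (ht₁ : t ≤ 1) {F : M → Y₁} {K : ℝ≥0} (hF : LipschitzWith K F)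
    {G : M → Y} {δ : ℝ} (hδ : 0 ≤ δ) (hGF : ∀ x y, ‖(G x - F x) - (G y - F y)‖ ≤ δ * dist x y) :
    lipNorm (fun x => T (G x) - F x) ≤ δ + (1 - t) * lipNorm F := by
  refine lipNorm_le (by nlinarith [lipNorm_nonneg F]) fun x y => ?_
  have hdecomp : (T (G x) - F x) - (T (G y) - F y)
      = T ((G x - F x) - (G y - F y)) + (t - 1) • (F x - F y) := by
    simp only [map_sub, hTY₁]
    module
  calc ‖(T (G x) - F x) - (T (G y) - F y)‖
        ≤ δ * dist x y + (1 - t) * (lipNorm F * dist x y) := by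
        rw [hdecomp]
        refine (norm_add_le _ _).trans (add_le_add ((hT _).trans (hGF x y)) ?_)
        rw [norm_smul, Real.norm_eq_abs, abs_of_nonpos (by linarith), neg_sub]
        exact mul_le_mul_of_nonneg_left (norm_sub_le_lipNorm_mul hF x y) (by linarith)
    _ = (δ + (1 - t) * lipNorm F) * dist x y := by ring

theorem exists_stronglyAttains_lipNorm_sub_le (hN : IsAbsoluteNorm N)
    (hPQ : ∀ v, ‖v‖ = N ‖P v‖ ‖Q v‖) (hP : ∀ y : Y₁, P y = y) (hQ : ∀ y : Y₁, Q y = 0)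
    {F : M → Y₁} (hF : IsLip0 z F) {G : M → Y} (hG : IsLip0 z G) (hGatt : StronglyAttains G)
    {δ : ℝ} (hδ : 0 < δ) (hGF : lipNorm (fun x => G x - F x) ≤ δ) (hFδ : 4 * δ ≤ lipNorm F) :
    ∃ H : M → Y₁, IsLip0 z H ∧ StronglyAttains H ∧ lipNorm (fun x => H x - F x) ≤ 3 * δ := by
  obtain ⟨⟨KFY, hFY⟩, -⟩ := hF.coe
  obtain ⟨⟨KF, hKF⟩, -⟩ := hF
  obtain ⟨⟨KG, hKG⟩, hGz⟩ := hG
  obtain ⟨p, q, hpq, hGpq⟩ := hGatt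
  have hd : 0 < dist p q := dist_pos.2 hpq
  have hW (x y : M) : ‖(G x - F x) - (G y - F y)‖ ≤ δ * dist x y :=
    (norm_sub_le_lipNorm_mul (hKG.sub hFY) x y).trans (by gcongr)
  have hLF : lipNorm F ≤ lipNorm G + δ := by
    refine lipNorm_le (by linarith [lipNorm_nonneg G]) fun x y => ?_
    calc ‖F x - F y‖ = ‖(G x - G y) - ((G x - F x) - (G y - F y))‖ := by
          rw [Submodule.coe_norm, Submodule.coe_sub]; congr 1; abel
      _ ≤ lipNorm G * dist x y + δ * dist x y :=
          (norm_sub_le _ _).trans (add_le_add (norm_sub_le_lipNorm_mul hKG x y) (hW x y))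
      _ = (lipNorm G + δ) * dist x y := by ring
  have hQv₀ : ‖Q (G p - G q)‖ ≤ δ * dist p q := by
    have hQW : Q (G p - G q) = Q ((G p - F p) - (G q - F q)) := by simp [hQ]
    have := hN.abs_right_le ‖P ((G p - F p) - (G q - F q))‖ ‖Q ((G p - F p) - (G q - F q))‖
    rw [abs_norm, ← hPQ] at this
    exact hQW ▸ this.trans (hW p q)
  have hPv₀ : (lipNorm F - 2 * δ) * dist p q ≤ ‖P (G p - G q)‖ := by
    have := hN.le_abs_add_abs ‖P (G p - G q)‖ ‖Q (G p - G q)‖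
    rw [abs_norm, abs_norm, ← hPQ, hGpq] at this
    nlinarith
  obtain ⟨T, t, hT, hTv₀, hTY₁, ht₁, ht⟩ :=
    exists_contraction_norm_eq hN hPQ hP hQ (v₀ := G p - G q) (norm_pos_iff.1 (by nlinarith))
  have htF : (1 - t) * lipNorm F ≤ 2 * δ := by
    have h := (mul_le_mul_of_nonneg_left hPv₀ (by linarith)).trans (ht.trans hQv₀)
    refine le_of_mul_le_mul_right ?_ hd
    nlinarith [mul_nonneg (mul_nonneg (sub_nonneg.2 ht₁) (sub_nonneg.2 hFδ)) hd.le]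
  have hTlip : LipschitzWith _ T := AddMonoidHomClass.lipschitz_of_bound T 1 (by simpa using hT)
  refine ⟨fun x => T (G x), ⟨⟨_, hTlip.comp hKG⟩, by simp [hGz]⟩,
    stronglyAttains_comp_of_norm_map_eq hT hKG hpq hGpq hTv₀, ?_⟩
  linarith [lipNorm_comp_sub_le hT hTY₁ ht₁ hKF hδ.le hW]

end Approximation

theorem saDense_absoluteSummand_general {M Y : Type*} [MetricSpace M]
    [NormedAddCommGroup Y] [NormedSpace ℝ Y]
    (z : M) (Y₁ : Submodule ℝ Y) (h₁ : IsAbsoluteSummand Y₁)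
    (h : SADense M z Y) :
    SADense M z Y₁ := by
  obtain ⟨N, hN, Z, P, Q, hPQ, hP, hQ⟩ := h₁.exists_projections
  intro F hF ε hε
  obtain ⟨G, hG, hGatt, hGF⟩ := h _ hF.coe (ε / 4) (by positivity)
  rcases lt_or_ge (lipNorm F) ε with hFε | hFε
  · obtain ⟨p, q, hpq, -⟩ := hGatt
    obtain ⟨⟨K, hK⟩, -⟩ := hF
    refine ⟨fun _ => 0, ⟨⟨0, LipschitzWith.const 0⟩, rfl⟩,
      stronglyAttains_of_norm_sub_le (c := 0) (by simp) hpq (by simp), ?_⟩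
    refine (lipNorm_le (lipNorm_nonneg F) fun x y => ?_).trans_lt hFε
    rw [zero_sub, zero_sub, neg_sub_neg, norm_sub_rev]
    exact norm_sub_le_lipNorm_mul hK x y
  · obtain ⟨H, hH, hHatt, hHF⟩ :=
      exists_stronglyAttains_lipNorm_sub_le hN hPQ hP hQ hF hG hGatt (by positivity) hGF.le
        (by linarith)
    exact ⟨H, hH, hHatt, by linarith⟩

/-- If `Y₁` is an absolute summand of `Y` and `SA(M, Y)` is dense in `Lip₀(M, Y)`, then
`SA(M, Y₁)` is dense in `Lip₀(M, Y₁)`. -/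
theorem saDense_absoluteSummand {M Y : Type*} [MetricSpace M] [CompleteSpace M]
    [NormedAddCommGroup Y] [NormedSpace ℝ Y] [CompleteSpace Y]
    (z : M) (Y₁ : Submodule ℝ Y) (h₁ : IsAbsoluteSummand Y₁)
    (h : SADense M z Y) :
    SADense M z Y₁ :=
  saDense_absoluteSummand_general z Y₁ h₁ h
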